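/- arXiv:2410.18877 — 7 statements merged into one kernel-verified Lean document; each statement's English description precedes it below -/
import Mathlib

section
/- Let A be an associative unital ring and J, J' left ideals of A. (1) If J ⊆ J', then every J'-vanishingly generated left A-module is J-vanishingly generated. (2) Conversely, if J is a two-sided ideal and every J'-vanishingly generated left A-module is J-vanishingly generated, then J ⊆ J'. -/
universe u v

/-- A left `A`-module `M` is `J`-vanishingly generated if the set of elements
killed by every element of `J` generates `M` as an `A`-module. -/
def IsVanishinglyGenerated {A : Type u} [Ring A] (J : Submodule A A)
    (M : Type v) [AddCommGroup M] [Module A M] : Prop :=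
  Submodule.span A {m : M | ∀ a ∈ J, a • m = 0} = ⊤

/-- (1) If `J ⊆ J'` then every `J'`-vanishingly generated module is
`J`-vanishingly generated.  (2) Conversely, if `J` is a two-sided ideal and every
`J'`-vanishingly generated module is `J`-vanishingly generated, then `J ≤ J'`. -/
theorem stmt_2 {A : Type u} [Ring A] (J J' : Submodule A A) :
    (J ≤ J' →
      ∀ (M : Type u) [AddCommGroup M] [Module A M],
        IsVanishinglyGenerated J' M → IsVanishinglyGenerated J M) ∧
    ((∀ a ∈ J, ∀ b : A, a * b ∈ J) →
      (∀ (M : Type u) [AddCommGroup M] [Module A M],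
        IsVanishinglyGenerated J' M → IsVanishinglyGenerated J M) →
      J ≤ J') := by
  constructor
  · intro hJ M _ _ h
    rw [IsVanishinglyGenerated, eq_top_iff, ← h]
    apply Submodule.span_mono
    intro m hm a ha
    exact hm a (hJ ha)
  · intro htwo h a ha
    have hM : IsVanishinglyGenerated J' (A ⧸ J') := by
      rw [IsVanishinglyGenerated, eq_top_iff]
      rintro x -
      obtain ⟨b, rfl⟩ := Submodule.Quotient.mk_surjective J' x
      have h1 : (Submodule.Quotient.mk (1 : A) : A ⧸ J') ∈
          {m : A ⧸ J' | ∀ a ∈ J', a • m = 0} := by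
        intro c hc
        rw [← Submodule.Quotient.mk_smul, smul_eq_mul, mul_one,
          Submodule.Quotient.mk_eq_zero]
        exact hc
      have hb := Submodule.smul_mem (Submodule.span A {m : A ⧸ J' | ∀ a ∈ J', a • m = 0})
        b (Submodule.subset_span h1)
      simpa [← Submodule.Quotient.mk_smul] using hb
    have h2 := h (A ⧸ J') hM
    have key : ∀ x : A ⧸ J', ∀ c ∈ J, c • x = 0 := by
      intro x
      have hx : x ∈ Submodule.span A {m : A ⧸ J' | ∀ a ∈ J, a • m = 0} := by
        rw [h2]; trivial
      induction hx using Submodule.span_induction with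
      | mem m hm => exact hm
      | zero => simp
      | add x y _ _ hx hy => intro c hc; rw [smul_add, hx c hc, hy c hc, add_zero]
      | smul b x _ hx => intro c hc; rw [smul_smul]; exact hx (c * b) (htwo c hc b)
    have := key (Submodule.Quotient.mk (1 : A)) a ha
    rwa [← Submodule.Quotient.mk_smul, smul_eq_mul, mul_one,
      Submodule.Quotient.mk_eq_zero] at this
end

section
/- Let A be an associative unital ring, J a two-sided ideal of A, and J' a left ideal of A. If for every left A-module M, M is J-vanishingly generated if and only if M is J'-vanishingly generated, then J ⊆ J'. In particular, two two-sided ideals of A determining the same class of vanishingly generated modules are equal. -/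
universe u v

lemma quot_vg {A : Type u} [Ring A] (J' : Submodule A A) :
    IsVanishinglyGenerated J' (A ⧸ J') := by
  rw [IsVanishinglyGenerated, Submodule.eq_top_iff']
  intro x
  obtain ⟨x, rfl⟩ := Submodule.Quotient.mk_surjective J' x
  have h1 : (Submodule.Quotient.mk 1 : A ⧸ J') ∈ {m : A ⧸ J' | ∀ a ∈ J', a • m = 0} := by
    intro a ha
    rw [← Submodule.Quotient.mk_smul, smul_eq_mul, mul_one, Submodule.Quotient.mk_eq_zero]
    exact ha
  have : Submodule.Quotient.mk x = x • (Submodule.Quotient.mk 1 : A ⧸ J') := by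
    rw [← Submodule.Quotient.mk_smul, smul_eq_mul, mul_one]
  rw [this]
  exact Submodule.smul_mem _ _ (Submodule.subset_span h1)

lemma key {A : Type u} [Ring A] (J J' : Submodule A A)
    (hJ : ∀ a ∈ J, ∀ b : A, a * b ∈ J)
    (hvg : IsVanishinglyGenerated J (A ⧸ J')) : J ≤ J' := by
  intro a ha
  have h1 : (Submodule.Quotient.mk 1 : A ⧸ J') ∈
      Submodule.span A {m : A ⧸ J' | ∀ a ∈ J, a • m = 0} := by
    rw [hvg]; trivial
  have hkill : ∀ m ∈ Submodule.span A {m : A ⧸ J' | ∀ a ∈ J, a • m = 0},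
      ∀ a ∈ J, a • m = 0 := by
    intro m hm
    induction hm using Submodule.span_induction with
    | mem m hm => exact hm
    | zero => intro a _; simp
    | add x y _ _ hx hy => intro a ha; rw [smul_add, hx a ha, hy a ha, add_zero]
    | smul c x _ hx => intro a ha; rw [smul_smul]; exact hx (a * c) (hJ a ha c)
  have := hkill _ h1 a ha
  rw [← Submodule.Quotient.mk_smul, smul_eq_mul, mul_one, Submodule.Quotient.mk_eq_zero] at this
  exact this

/-- If a two-sided ideal `J` and a left ideal `J'` determine the same class
of vanishingly generated modules, then `J ⊆ J'`; in particular two two-sided ideals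
determining the same class are equal. -/
theorem stmt_4 {A : Type u} [Ring A] (J J' : Submodule A A)
    (hJ : ∀ a ∈ J, ∀ b : A, a * b ∈ J)
    (h : ∀ (M : Type u) [AddCommGroup M] [Module A M],
      IsVanishinglyGenerated J M ↔ IsVanishinglyGenerated J' M) :
    J ≤ J' ∧ ((∀ a ∈ J', ∀ b : A, a * b ∈ J') → J = J') := by
  have hle : J ≤ J' := key J J' hJ ((h (A ⧸ J')).mpr (quot_vg J'))
  refine ⟨hle, fun hJ' => le_antisymm hle ?_⟩
  exact key J' J hJ' ((h (A ⧸ J)).mp (quot_vg J))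
end

section
/- Let A be an associative unital ring and (J_d)_{d∈ℕ} a descending sequence of two-sided ideals of A (J_{d+1} ⊆ J_d for all d). Call a left A-module M analytic (with respect to this filtration) if every element of M is annihilated by some J_d, i.e. for each m ∈ M there exists d with a•m = 0 for all a ∈ J_d. Suppose J is a two-sided ideal of A such that a left A-module is J-vanishingly generated if and only if it is analytic. Then there exists d₀ ∈ ℕ such that J_d = J for every d ≥ d₀. -/
universe u v

/-- If `(J_d)` is a descending sequence of two-sided ideals and `J` is a
two-sided ideal such that a module is `J`-vanishingly generated iff it is analytic for the
filtration `(J_d)`, then the filtration is eventually constant equal to `J`. -/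
theorem stmt_6 {A : Type u} [Ring A] (Jseq : ℕ → Submodule A A)
    (htwo : ∀ d, ∀ a ∈ Jseq d, ∀ b : A, a * b ∈ Jseq d)
    (hdesc : ∀ d, Jseq (d + 1) ≤ Jseq d)
    (J : Submodule A A) (hJ : ∀ a ∈ J, ∀ b : A, a * b ∈ J)
    (h : ∀ (M : Type u) [AddCommGroup M] [Module A M],
      IsVanishinglyGenerated J M ↔ ∀ m : M, ∃ d, ∀ a ∈ Jseq d, a • m = 0) :
    ∃ d₀, ∀ d, d₀ ≤ d → Jseq d = J := by
  -- Step 1: A ⧸ J is J-vanishingly generated, hence analytic, so some Jseq d₀ ≤ J.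
  have hvg : IsVanishinglyGenerated J (A ⧸ J) := by
    rw [IsVanishinglyGenerated, Submodule.eq_top_iff']
    intro x
    obtain ⟨b, rfl⟩ := Submodule.Quotient.mk_surjective _ x
    have h1 : (Submodule.Quotient.mk 1 : A ⧸ J) ∈
        Submodule.span A {m : A ⧸ J | ∀ a ∈ J, a • m = 0} := by
      apply Submodule.subset_span
      intro a ha
      rw [show a • (Submodule.Quotient.mk 1 : A ⧸ J)
            = Submodule.Quotient.mk (a * 1) from rfl,
        Submodule.Quotient.mk_eq_zero]
      simpa using ha
    have h2 := Submodule.smul_mem _ b h1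
    rwa [show b • (Submodule.Quotient.mk 1 : A ⧸ J)
          = Submodule.Quotient.mk (b * 1) from rfl, mul_one] at h2
  obtain ⟨d₀, hd₀⟩ := ((h (A ⧸ J)).mp hvg) (Submodule.Quotient.mk 1)
  have hle : ∀ d, d₀ ≤ d → Jseq d ≤ J := by
    intro d hd
    have hmono : ∀ d', d₀ ≤ d' → Jseq d' ≤ Jseq d₀ := by
      intro d' hd'
      induction d' with
      | zero => simpa [Nat.le_zero.mp hd'] using le_refl (Jseq d₀)
      | succ n ih =>
        rcases Nat.lt_or_ge d₀ (n+1) with hlt | hge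
        · exact le_trans (hdesc n) (ih (Nat.lt_succ_iff.mp hlt))
        · have : d₀ = n + 1 := le_antisymm hd' hge
          rw [this]
    intro a ha
    have := hd₀ a (hmono d hd ha)
    rw [show a • (Submodule.Quotient.mk 1 : A ⧸ J)
          = Submodule.Quotient.mk (a * 1) from rfl,
      Submodule.Quotient.mk_eq_zero] at this
    simpa using this
  -- Step 2: each A ⧸ Jseq d is analytic, hence J-vanishingly generated, so J ≤ Jseq d.
  have hge : ∀ d, J ≤ Jseq d := by
    intro d
    have hana : ∀ m : A ⧸ Jseq d, ∃ e, ∀ a ∈ Jseq e, a • m = 0 := by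
      intro m
      refine ⟨d, ?_⟩
      obtain ⟨b, rfl⟩ := Submodule.Quotient.mk_surjective _ m
      intro a ha
      rw [show a • (Submodule.Quotient.mk b : A ⧸ Jseq d)
            = Submodule.Quotient.mk (a * b) from rfl,
        Submodule.Quotient.mk_eq_zero]
      exact htwo d a ha b
    have hvg' : IsVanishinglyGenerated J (A ⧸ Jseq d) := (h _).mpr hana
    intro a ha
    have hkill : ∀ m : A ⧸ Jseq d, ∀ b ∈ J, b • m = 0 := by
      intro m
      have hm : m ∈ Submodule.span A {m : A ⧸ Jseq d | ∀ a ∈ J, a • m = 0} := by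
        rw [hvg']; trivial
      induction hm using Submodule.span_induction with
      | mem x hx => exact hx
      | zero => intro b _; simp
      | add x y _ _ hx hy => intro b hb; rw [smul_add, hx b hb, hy b hb, add_zero]
      | smul c x _ hx =>
        intro b hb
        rw [smul_smul]
        exact hx (b * c) (hJ b hb c)
    have := hkill (Submodule.Quotient.mk 1) a ha
    rw [show a • (Submodule.Quotient.mk 1 : A ⧸ Jseq d)
          = Submodule.Quotient.mk (a * 1) from rfl,
      Submodule.Quotient.mk_eq_zero] at this
    simpa using this
  exact ⟨d₀, fun d hd => le_antisymm (hle d hd) (hge d)⟩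
end

section
/- Let k be a commutative unital ring, A an associative unital k-algebra, and Y ⊆ A a subset generating A as a k-algebra. For every d ∈ ℕ, the two-sided ideal of A generated by all products (y_1 − 1)(y_2 − 1)⋯(y_d − 1) with y_1,…,y_d ∈ Y equals the k-linear span of all products (y_1 − 1)(y_2 − 1)⋯(y_r − 1) with r ≥ d and y_1,…,y_r ∈ Y. -/
/-!
The span `M` of the products `(y₁ - 1)⋯(y_r - 1)` with `r ≥ d` is stable under multiplication by
a generator `y ∈ Y` on either side, since `y * x = (y - 1) * x + x` and `x * y = x * (y - 1) + x`.
As `Y` generates `A`, `M` is therefore a two-sided ideal, so it contains the ideal generated by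
the length-`d` products; conversely a product of length `r ≥ d` is a length-`d` product times
the product of its remaining factors.
-/

namespace Algebra

variable {k A : Type*} [CommSemiring k] [Semiring A] [Algebra k A] {Y : Set A}

theorem mul_mem_left_of_adjoin_eq_top (hY : adjoin k Y = ⊤) {M : Submodule k A}
    (hM : ∀ y ∈ Y, ∀ m ∈ M, y * m ∈ M) (a : A) {m : A} (hm : m ∈ M) : a * m ∈ M := by
  have ha : a ∈ adjoin k Y := hY ▸ mem_top
  induction ha using adjoin_induction generalizing m with
  | mem y hy => exact hM y hy m hm
  | algebraMap c => simpa only [← smul_def] using M.smul_mem c hm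
  | add x y _ _ hx hy => simpa only [add_mul] using add_mem (hx hm) (hy hm)
  | mul x y _ _ hx hy => simpa only [mul_assoc] using hx (hy hm)

theorem mul_mem_right_of_adjoin_eq_top (hY : adjoin k Y = ⊤) {M : Submodule k A}
    (hM : ∀ y ∈ Y, ∀ m ∈ M, m * y ∈ M) (a : A) {m : A} (hm : m ∈ M) : m * a ∈ M := by
  have ha : a ∈ adjoin k Y := hY ▸ mem_top
  induction ha using adjoin_induction generalizing m with
  | mem y hy => exact hM y hy m hm
  | algebraMap c => simpa only [← commutes, ← smul_def] using M.smul_mem c hm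
  | add x y _ _ hx hy => simpa only [mul_add] using add_mem (hx hm) (hy hm)
  | mul x y _ _ hx hy => simpa only [← mul_assoc] using hy (hx hm)

end Algebra

section ShiftedProducts

variable {k A : Type*} [CommSemiring k] [Ring A] [Algebra k A]

def shiftedProducts (Y : Set A) (d : ℕ) : Set A :=
  {x | ∃ r : ℕ, d ≤ r ∧ ∃ y : Fin r → A, (∀ i, y i ∈ Y) ∧ x = (List.ofFn fun i => y i - 1).prod}

variable {Y : Set A} {d : ℕ} {y x : A}

theorem sub_one_mul_mem_shiftedProducts (hy : y ∈ Y) (hx : x ∈ shiftedProducts Y d) :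
    (y - 1) * x ∈ shiftedProducts Y d := by
  obtain ⟨r, hr, z, hz, rfl⟩ := hx
  refine ⟨r + 1, hr.trans r.le_succ, Fin.cons y z, Fin.forall_fin_succ.2 ⟨hy, hz⟩, ?_⟩
  simp [List.ofFn_succ]

theorem mul_sub_one_mem_shiftedProducts (hy : y ∈ Y) (hx : x ∈ shiftedProducts Y d) :
    x * (y - 1) ∈ shiftedProducts Y d := by
  obtain ⟨r, hr, z, hz, rfl⟩ := hx
  refine ⟨r + 1, hr.trans r.le_succ, Fin.snoc z y, Fin.forall_fin_succ'.2 ⟨by simpa, by simpa⟩, ?_⟩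
  rw [List.ofFn_succ']
  simp [List.concat_eq_append]

theorem mul_mem_span_shiftedProducts_left (hy : y ∈ Y)
    (hx : x ∈ Submodule.span k (shiftedProducts Y d)) :
    y * x ∈ Submodule.span k (shiftedProducts Y d) := by
  refine (Submodule.span_le (p := (Submodule.span k _).comap (LinearMap.mulLeft k y)) |>.2 ?_) hx
  intro z hz
  rw [SetLike.mem_coe, Submodule.mem_comap, LinearMap.mulLeft_apply, ← sub_add_cancel y 1, add_mul,
    one_mul]
  exact add_mem (Submodule.subset_span (sub_one_mul_mem_shiftedProducts hy hz))
    (Submodule.subset_span hz)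

theorem mul_mem_span_shiftedProducts_right (hy : y ∈ Y)
    (hx : x ∈ Submodule.span k (shiftedProducts Y d)) :
    x * y ∈ Submodule.span k (shiftedProducts Y d) := by
  refine (Submodule.span_le (p := (Submodule.span k _).comap (LinearMap.mulRight k y)) |>.2 ?_) hx
  intro z hz
  rw [SetLike.mem_coe, Submodule.mem_comap, LinearMap.mulRight_apply, ← sub_add_cancel y 1,
    mul_add, mul_one]
  exact add_mem (Submodule.subset_span (mul_sub_one_mem_shiftedProducts hy hz))
    (Submodule.subset_span hz)

end ShiftedProducts

/-- If `Y` generates `A` as a `k`-algebra, then for every `d ∈ ℕ` the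
two-sided ideal generated by the length-`d` products `(y₁ - 1)⋯(y_d - 1)` with `y_i ∈ Y`
equals the `k`-linear span of all products `(y₁ - 1)⋯(y_r - 1)` with `r ≥ d`, `y_i ∈ Y`. -/
theorem stmt_8 {k A : Type*} [CommRing k] [Ring A] [Algebra k A]
    (Y : Set A) (hY : Algebra.adjoin k Y = ⊤) (d : ℕ) :
    Submodule.span k {x : A | ∃ a b : A, ∃ y : Fin d → A,
        (∀ i, y i ∈ Y) ∧ x = a * (List.ofFn fun i => y i - 1).prod * b}
      = Submodule.span k {x : A | ∃ r : ℕ, d ≤ r ∧ ∃ y : Fin r → A,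
        (∀ i, y i ∈ Y) ∧ x = (List.ofFn fun i => y i - 1).prod} := by
  apply le_antisymm
  · rw [Submodule.span_le]
    rintro _ ⟨a, b, y, hy, rfl⟩
    have hprod : (List.ofFn fun i => y i - 1).prod ∈ Submodule.span k (shiftedProducts Y d) :=
      Submodule.subset_span ⟨d, le_rfl, y, hy, rfl⟩
    have hleft := Algebra.mul_mem_left_of_adjoin_eq_top hY
      (fun _ hy _ => mul_mem_span_shiftedProducts_left hy) a hprod
    exact Algebra.mul_mem_right_of_adjoin_eq_top hY
      (fun _ hy _ => mul_mem_span_shiftedProducts_right hy) b hleft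
  · rw [Submodule.span_le]
    rintro _ ⟨r, hr, y, hy, rfl⟩
    obtain ⟨m, rfl⟩ := Nat.exists_eq_add_of_le hr
    refine Submodule.subset_span ⟨1, (List.ofFn fun j : Fin m => y (Fin.natAdd d j) - 1).prod,
      fun i => y (Fin.castAdd m i), fun i => hy _, ?_⟩
    rw [one_mul, List.ofFn_add, List.prod_append]
    rfl
end

section
/- Let k be a commutative unital ring, N ≥ 1, and let G = ℤ^N be the free abelian group of rank N (written multiplicatively). For every d ∈ ℕ, the quotient k-module I_k(G)^d / I_k(G)^{d+1} of successive powers of the augmentation ideal of k[G] is a free k-module of rank C(N+d−1, d), the number of ordered N-tuples of natural numbers summing to d. -/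
/-- The augmentation ideal of the monoid algebra `k[G]`, i.e. the kernel of the
`k`-algebra homomorphism `k[G] → k` sending each `g ∈ G` to `1`, regarded as a
`k`-submodule of `k[G]`. -/
noncomputable def augIdeal (k : Type*) [CommRing k] (G : Type*) [Monoid G] :
    Submodule k (MonoidAlgebra k G) :=
  Submodule.restrictScalars k (RingHom.ker (MonoidAlgebra.lift k k G 1))

/-- The `d`-th power of the augmentation ideal of `k[G]` (with the usual ideal-theoretic
convention that the zeroth power is the whole ring). -/
noncomputable def augPow (k : Type*) [CommRing k] (G : Type*) [Monoid G] :
    ℕ → Submodule k (MonoidAlgebra k G)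
  | 0 => ⊤
  | d + 1 => augIdeal k G ^ (d + 1)

/-!
Send the generator `x_i = ofAdd (Pi.single i 1)` of `k[ℤ^σ]` to `1 + X_i` in the power
series ring `k⟦X_i : i ∈ σ⟧`. This maps `I` into the ideal of series without constant term,
hence `I^(d+1)` to series of order `> d`, and it maps `∏ (x_i - 1)^(e_i)` to `X^e`. Reading
off the coefficients of degree `d` therefore separates the classes of the monomials
`∏ (x_i - 1)^(e_i)` of degree `d` in `I^d / I^(d+1)`. They also span it:
`g - 1 ≡ ∑ g_i (x_i - 1) mod I²` because `g ↦ g - 1` is additive modulo `I²`, so `I` is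
spanned by the `x_i - 1` modulo `I²`, and `I^d` by the monomials of degree `d` modulo
`I^(d+1)`. These monomials are counted by `Sym σ d`.
-/

open Submodule

section QuotientBasis

variable {k M S : Type*} [CommRing k] [AddCommGroup M] [Module k M] [DecidableEq S]

noncomputable def Submodule.basisQuotientComapOfDual {P Q : Submodule k M} (v : S → M)
    (hvQ : ∀ s, v s ∈ Q) (hQ : Q ≤ span k (Set.range v) ⊔ P) (L : M →ₗ[k] S → k)
    (hLP : P ≤ LinearMap.ker L) (hLv : ∀ s, L (v s) = Pi.single s 1) :
    Module.Basis S k (Q ⧸ P.comap Q.subtype) :=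
  let v' : S → Q := fun s => ⟨v s, hvQ s⟩
  Module.Basis.mk (v := (P.comap Q.subtype).mkQ ∘ v')
    (LinearIndependent.of_comp
      ((P.comap Q.subtype).liftQ (L ∘ₗ Q.subtype) fun _ hx => hLP hx) <| by
      -- `L` descends to the quotient, where it sends the classes of `v` to the standard basis
      have hL : ∀ s, (P.comap Q.subtype).liftQ (L ∘ₗ Q.subtype) (fun _ hx => hLP hx)
          ((P.comap Q.subtype).mkQ (v' s)) = Pi.single s 1 := hLv
      simpa only [Function.comp_def, hL] using Pi.linearIndependent_single_one S k)
    (by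
      rintro x -
      obtain ⟨⟨x, hx⟩, rfl⟩ := Submodule.Quotient.mk_surjective _ x
      obtain ⟨y, hy, p, hp, rfl⟩ := mem_sup.mp (hQ hx)
      rw [← Finsupp.range_linearCombination] at hy ⊢
      obtain ⟨c, rfl⟩ := hy
      refine ⟨c, ?_⟩
      have hc : Finsupp.linearCombination k v c = Q.subtype (Finsupp.linearCombination k v' c) :=
        (LinearMap.map_finsupp_linearCombination Q.subtype (g := v') c).symm
      rw [← LinearMap.map_finsupp_linearCombination, mkQ_apply, Submodule.Quotient.eq, mem_comap,
        map_sub]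
      change _ - (Finsupp.linearCombination k v c + p) ∈ P
      rw [hc]
      simpa using neg_mem hp)

end QuotientBasis

section IdealPow

variable {k A : Type*} [CommRing k] [CommRing A] [Algebra k A] (I : Ideal A)

theorem Ideal.restrictScalars_pow_mul (a b : ℕ) :
    (I ^ a).restrictScalars k * (I ^ b).restrictScalars k = (I ^ (a + b)).restrictScalars k := by
  rw [← Ideal.restrictScalars_mul, pow_add]

theorem Ideal.restrictScalars_pow_le_sup {V : ℕ → Submodule k A}
    (hV : ∀ d, V d ≤ (I ^ d).restrictScalars k) (hmul : ∀ d, V d * V 1 ≤ V (d + 1))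
    (h₀ : ⊤ ≤ V 0 ⊔ I.restrictScalars k)
    (h₁ : I.restrictScalars k ≤ V 1 ⊔ (I ^ 2).restrictScalars k) (d : ℕ) :
    (I ^ d).restrictScalars k ≤ V d ⊔ (I ^ (d + 1)).restrictScalars k := by
  induction d with
  | zero => rwa [pow_zero, zero_add, pow_one, Ideal.one_eq_top, restrictScalars_top]
  | succ d ih =>
    have hle : ∀ a b, d + 2 ≤ a + b →
        (I ^ a).restrictScalars k * (I ^ b).restrictScalars k ≤ (I ^ (d + 2)).restrictScalars k :=
      fun a b h => (Ideal.restrictScalars_pow_mul I a b).trans_le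
        fun _ hx => Ideal.pow_le_pow_right h hx
    calc (I ^ (d + 1)).restrictScalars k
        = (I ^ d).restrictScalars k * (I ^ 1).restrictScalars k :=
          (Ideal.restrictScalars_pow_mul I d 1).symm
      _ ≤ (V d ⊔ (I ^ (d + 1)).restrictScalars k) * (V 1 ⊔ (I ^ 2).restrictScalars k) :=
          mul_le_mul' ih (by rwa [pow_one])
      _ ≤ V (d + 1) ⊔ (I ^ (d + 2)).restrictScalars k := by
        simp only [Submodule.sup_mul, Submodule.mul_sup, sup_le_iff]
        refine ⟨⟨le_sup_of_le_left (hmul d), le_sup_of_le_right ?_⟩,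
          le_sup_of_le_right ?_, le_sup_of_le_right ?_⟩
        · exact (mul_le_mul' le_rfl (hV 1)).trans (hle (d + 1) 1 le_rfl)
        · exact (mul_le_mul' (hV d) le_rfl).trans (hle d 2 le_rfl)
        · exact hle (d + 1) 2 (by omega)

end IdealPow

theorem MvPowerSeries.le_order_of_mem_ker_constantCoeff_pow {σ R : Type*} [CommSemiring R]
    {n : ℕ} {f : MvPowerSeries σ R}
    (hf : f ∈ RingHom.ker (constantCoeff (σ := σ) (R := R)) ^ n) :
    (n : ℕ∞) ≤ f.order := by
  induction n generalizing f with
  | zero => simp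
  | succ n ih =>
    rw [pow_succ] at hf
    refine Submodule.mul_induction_on hf (fun a ha b hb => ?_) (fun a b ha hb => ?_)
    · calc ((n + 1 : ℕ) : ℕ∞) = n + 1 := by push_cast; rfl
        _ ≤ a.order + b.order := add_le_add (ih ha) (one_le_order_iff_constCoeff_eq_zero.mpr hb)
        _ ≤ (a * b).order := le_order_mul
    · exact (le_min ha hb).trans min_order_le_add

noncomputable def Finsupp.degreeEqEquivSym (σ : Type*) [DecidableEq σ] (d : ℕ) :
    {e : σ →₀ ℕ // e.degree = d} ≃ Sym σ d :=
  ((Sym.equivNatSum σ d).trans (Equiv.subtypeEquivRight fun _ => Iff.rfl)).symm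

theorem Finsupp.natCard_degree_eq (σ : Type*) (d : ℕ) :
    Nat.card {e : σ →₀ ℕ // e.degree = d} = (Nat.card σ + d - 1).choose d := by
  classical
  rw [Nat.card_congr (degreeEqEquivSym σ d), Sym.natCard_sym_eq_choose]

instance Finsupp.finite_degree_eq (σ : Type*) [Finite σ] (d : ℕ) :
    Finite {e : σ →₀ ℕ // e.degree = d} := by
  classical
  exact Finite.of_equiv _ (degreeEqEquivSym σ d).symm

namespace MonoidAlgebra

variable (k : Type*) [CommRing k]

section Augmentation

variable (G : Type*) [CommMonoid G]

noncomputable abbrev augmentationIdeal : Ideal (MonoidAlgebra k G) :=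
  RingHom.ker (lift k k G 1)

variable {k G}

theorem of_sub_one_mem_augmentationIdeal (g : G) :
    of k G g - 1 ∈ augmentationIdeal k G := by
  simp

theorem sub_algebraMap_lift_mem_span (f : MonoidAlgebra k G) :
    f - algebraMap k _ (lift k k G 1 f) ∈ span k (Set.range fun g => of k G g - 1) := by
  induction f using MonoidAlgebra.induction_linear with
  | zero => simp
  | add f g hf hg => simpa [add_sub_add_comm] using add_mem hf hg
  | single g r =>
    have : single g r - algebraMap k _ (lift k k G 1 (single g r)) = r • (of k G g - 1) := by
      simp [smul_sub, Algebra.algebraMap_eq_smul_one]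
    rw [this]
    exact smul_mem _ _ (subset_span ⟨g, rfl⟩)

theorem augmentationIdeal_le_span_of_sub_one :
    (augmentationIdeal k G).restrictScalars k ≤ span k (Set.range fun g => of k G g - 1) := by
  intro f hf
  simpa [(RingHom.mem_ker).mp hf] using sub_algebraMap_lift_mem_span f

theorem top_le_span_one_sup_augmentationIdeal :
    ⊤ ≤ span k {1} ⊔ (augmentationIdeal k G).restrictScalars k := by
  intro f _
  rw [← add_sub_cancel (algebraMap k _ (lift k k G 1 f)) f]
  refine add_mem_sup ?_ ?_
  · simpa [Algebra.algebraMap_eq_smul_one] using smul_mem _ _ (mem_span_singleton_self _)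
  · simp

variable (k G) in
noncomputable def ofSubOneModSq :
    Additive G →+ MonoidAlgebra k G ⧸ augmentationIdeal k G ^ 2 where
  toFun g := Ideal.Quotient.mk _ (of k G g.toMul - 1)
  map_zero' := by simp [← one_def]
  map_add' g h := by
    rw [← map_add, Ideal.Quotient.eq, toMul_add, map_mul, sq]
    convert Ideal.mul_mem_mul (of_sub_one_mem_augmentationIdeal g.toMul)
      (of_sub_one_mem_augmentationIdeal (k := k) h.toMul) using 1
    ring

end Augmentation

variable {σ : Type*}

section Lattice

variable [DecidableEq σ]

noncomputable def stdGen (i : σ) : MonoidAlgebra k (Multiplicative (σ → ℤ)) :=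
  of k _ (.ofAdd (Pi.single i 1))

noncomputable def augMonomial (e : σ →₀ ℕ) : MonoidAlgebra k (Multiplicative (σ → ℤ)) :=
  e.prod fun i n => (stdGen k i - 1) ^ n

variable {k}

theorem augMonomial_add (e f : σ →₀ ℕ) :
    augMonomial k (e + f) = augMonomial k e * augMonomial k f :=
  Finsupp.prod_add_index' (fun _ => pow_zero _) fun _ _ _ => pow_add _ _ _

theorem augMonomial_single_one (i : σ) : augMonomial k (Finsupp.single i 1) = stdGen k i - 1 := by
  simp [augMonomial]

theorem augMonomial_mem_pow (e : σ →₀ ℕ) :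
    augMonomial k e ∈ augmentationIdeal k (Multiplicative (σ → ℤ)) ^ e.degree := by
  rw [Finsupp.degree_apply, ← Finset.prod_pow_eq_pow_sum]
  exact Ideal.prod_mem_prod fun i _ => Ideal.pow_mem_pow (of_sub_one_mem_augmentationIdeal _) _

variable [Fintype σ]

theorem of_sub_one_sub_sum_mem_sq (z : σ → ℤ) :
    of k _ (.ofAdd z) - 1 - ∑ i, z i • (stdGen k i - 1) ∈
      augmentationIdeal k (Multiplicative (σ → ℤ)) ^ 2 := by
  let δ := (ofSubOneModSq k (Multiplicative (σ → ℤ))).comp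
    (AddEquiv.additiveMultiplicative (σ → ℤ)).symm.toAddMonoidHom
  have hδ : δ z = ∑ i, z i • δ (Pi.single i 1) := by
    conv_lhs => rw [← Finset.univ_sum_single z]
    rw [map_sum]
    refine Finset.sum_congr rfl fun i _ => ?_
    rw [← map_zsmul, ← Pi.single_smul, smul_eq_mul, mul_one]
  rw [← Ideal.Quotient.eq_zero_iff_mem, map_sub, map_sum, sub_eq_zero]
  simpa [δ, ofSubOneModSq, stdGen] using hδ

theorem augmentationIdeal_le_span_stdGen_sup_sq :
    (augmentationIdeal k (Multiplicative (σ → ℤ))).restrictScalars k ≤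
      span k (Set.range fun i => stdGen k i - 1) ⊔
        (augmentationIdeal k (Multiplicative (σ → ℤ)) ^ 2).restrictScalars k := by
  refine augmentationIdeal_le_span_of_sub_one.trans (span_le.mpr ?_)
  rintro _ ⟨g, rfl⟩
  change of k _ g - 1 ∈ _
  rw [← add_sub_cancel (∑ i, g.toAdd i • (stdGen k i - 1)) (of k _ g - 1)]
  exact add_mem_sup (sum_mem fun i _ => zsmul_mem (subset_span (Set.mem_range_self i)) _)
    (of_sub_one_sub_sum_mem_sq g.toAdd)

variable (k) in
noncomputable def augMonomialSpan (d : ℕ) :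
    Submodule k (MonoidAlgebra k (Multiplicative (σ → ℤ))) :=
  span k (Set.range fun e : {e : σ →₀ ℕ // e.degree = d} => augMonomial k e.1)

theorem augmentationIdeal_pow_le_augMonomialSpan_sup (d : ℕ) :
    (augmentationIdeal k (Multiplicative (σ → ℤ)) ^ d).restrictScalars k ≤
      augMonomialSpan k d ⊔
        (augmentationIdeal k (Multiplicative (σ → ℤ)) ^ (d + 1)).restrictScalars k := by
  refine Ideal.restrictScalars_pow_le_sup _ ?_ ?_ ?_ ?_ d
  · intro d
    rw [augMonomialSpan, span_le]
    rintro _ ⟨e, rfl⟩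
    simpa [e.2] using augMonomial_mem_pow (k := k) e.1
  · intro d
    rw [augMonomialSpan, augMonomialSpan, span_mul_span, span_le]
    rintro _ ⟨_, ⟨e, rfl⟩, _, ⟨f, rfl⟩, rfl⟩
    exact subset_span ⟨⟨e.1 + f.1, by simp [e.2, f.2]⟩, augMonomial_add _ _⟩
  · refine top_le_span_one_sup_augmentationIdeal.trans (sup_le_sup_right (span_mono ?_) _)
    rintro _ rfl
    exact ⟨⟨0, map_zero _⟩, Finsupp.prod_zero_index⟩
  · refine augmentationIdeal_le_span_stdGen_sup_sq.trans (sup_le_sup_right (span_mono ?_) _)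
    rintro _ ⟨i, rfl⟩
    exact ⟨⟨Finsupp.single i 1, Finsupp.degree_single _ _⟩, augMonomial_single_one i⟩

end Lattice

section PowerSeries

variable [Fintype σ]

noncomputable def onePlusXUnit (i : σ) : (MvPowerSeries σ k)ˣ :=
  IsUnit.unit (a := 1 + MvPowerSeries.X i) (MvPowerSeries.isUnit_iff_constantCoeff.mpr (by simp))

noncomputable def toMvPowerSeries :
    MonoidAlgebra k (Multiplicative (σ → ℤ)) →ₐ[k] MvPowerSeries σ k :=
  lift k _ _ <| (Units.coeHom _).comp <|
    MonoidHom.mk' (fun g => ∏ i, onePlusXUnit k i ^ g.toAdd i) fun g h => by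
      simp [zpow_add, Finset.prod_mul_distrib]

variable {k}

theorem toMvPowerSeries_of (g : Multiplicative (σ → ℤ)) :
    toMvPowerSeries k (of k _ g) = ↑(∏ i, onePlusXUnit k i ^ g.toAdd i) :=
  lift_of _ _

theorem constantCoeff_toMvPowerSeries_of (g : Multiplicative (σ → ℤ)) :
    MvPowerSeries.constantCoeff (toMvPowerSeries k (of k _ g)) = 1 := by
  have h : Units.map (MvPowerSeries.constantCoeff (σ := σ) (R := k)).toMonoidHom
      (∏ i, onePlusXUnit k i ^ g.toAdd i) = 1 := by
    have hi : ∀ i, Units.map (MvPowerSeries.constantCoeff (σ := σ) (R := k)).toMonoidHom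
        (onePlusXUnit k i) = 1 := fun i => Units.ext (by simp [onePlusXUnit])
    rw [map_prod]
    exact Finset.prod_eq_one fun i _ => by rw [map_zpow, hi, one_zpow]
  rw [toMvPowerSeries_of]
  exact congrArg Units.val h

theorem map_augmentationIdeal_le :
    (augmentationIdeal k (Multiplicative (σ → ℤ))).map (toMvPowerSeries k) ≤
      RingHom.ker MvPowerSeries.constantCoeff := by
  refine Ideal.map_le_iff_le_comap.mpr fun f hf => ?_
  refine (span_le (p := ((RingHom.ker MvPowerSeries.constantCoeff).comap
    (toMvPowerSeries k)).restrictScalars k)).mpr ?_ (augmentationIdeal_le_span_of_sub_one hf)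
  rintro _ ⟨g, rfl⟩
  simp only [SetLike.mem_coe, restrictScalars_mem, Ideal.mem_comap, RingHom.mem_ker, map_sub,
    map_one, constantCoeff_toMvPowerSeries_of, sub_self]

theorem coeff_toMvPowerSeries_eq_zero_of_mem_pow {n : ℕ}
    {f : MonoidAlgebra k (Multiplicative (σ → ℤ))}
    (hf : f ∈ augmentationIdeal k (Multiplicative (σ → ℤ)) ^ n) {e : σ →₀ ℕ}
    (he : e.degree < n) : MvPowerSeries.coeff e (toMvPowerSeries k f) = 0 := by
  have hmap : (augmentationIdeal k (Multiplicative (σ → ℤ)) ^ n).map (toMvPowerSeries k) ≤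
      RingHom.ker MvPowerSeries.constantCoeff ^ n := by
    rw [Ideal.map_pow]
    exact Ideal.pow_right_mono map_augmentationIdeal_le n
  refine MvPowerSeries.coeff_of_lt_order ((Nat.cast_lt.mpr he).trans_le ?_)
  exact MvPowerSeries.le_order_of_mem_ker_constantCoeff_pow (hmap (Ideal.mem_map_of_mem _ hf))

variable [DecidableEq σ]

theorem toMvPowerSeries_stdGen (i : σ) :
    toMvPowerSeries k (stdGen k i) = 1 + MvPowerSeries.X i := by
  rw [stdGen, toMvPowerSeries_of, Finset.prod_eq_single i (fun j _ hj => by simp [hj]) (by simp)]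
  simp [onePlusXUnit]

theorem toMvPowerSeries_augMonomial (e : σ →₀ ℕ) :
    toMvPowerSeries k (augMonomial k e) = MvPowerSeries.monomial e 1 := by
  simp [augMonomial, toMvPowerSeries_stdGen, MvPowerSeries.monomial_one_eq]

end PowerSeries

variable [Fintype σ] [DecidableEq σ]

noncomputable def basisAugmentationIdealPowQuotient (d : ℕ) :
    Module.Basis {e : σ →₀ ℕ // e.degree = d} k
      ((augmentationIdeal k (Multiplicative (σ → ℤ)) ^ d).restrictScalars k ⧸
        ((augmentationIdeal k (Multiplicative (σ → ℤ)) ^ (d + 1)).restrictScalars k).comap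
          ((augmentationIdeal k (Multiplicative (σ → ℤ)) ^ d).restrictScalars k).subtype) :=
  Submodule.basisQuotientComapOfDual (fun e => augMonomial k e.1)
    (fun e => by simpa [e.2] using augMonomial_mem_pow (k := k) e.1)
    (augmentationIdeal_pow_le_augMonomialSpan_sup d)
    (LinearMap.pi fun e => MvPowerSeries.coeff e.1 ∘ₗ (toMvPowerSeries k).toLinearMap)
    (fun _ hf => funext fun e =>
      coeff_toMvPowerSeries_eq_zero_of_mem_pow hf (e.2.trans_lt d.lt_succ_self))
    (fun e => funext fun e' => by
      simp [toMvPowerSeries_augMonomial, MvPowerSeries.coeff_monomial, Pi.single_apply,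
        Subtype.ext_iff])

end MonoidAlgebra

theorem augPow_eq_restrictScalars (k G : Type*) [CommRing k] [CommMonoid G] (d : ℕ) :
    augPow k G d = (MonoidAlgebra.augmentationIdeal k G ^ d).restrictScalars k := by
  cases d with
  | zero => rw [pow_zero, Ideal.one_eq_top, restrictScalars_top]; rfl
  | succ d => exact (Submodule.restrictScalars_pow d.succ_ne_zero).symm

theorem stmt_13_general {k : Type*} [CommRing k] (N d : ℕ) :
    Nonempty (Module.Basis (Fin ((N + d - 1).choose d)) k
      (↥(augPow k (Multiplicative (Fin N → ℤ)) d) ⧸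
        Submodule.comap (augPow k (Multiplicative (Fin N → ℤ)) d).subtype
          (augPow k (Multiplicative (Fin N → ℤ)) (d + 1)))) := by
  have hcard : Nat.card {e : Fin N →₀ ℕ // e.degree = d} = (N + d - 1).choose d := by
    rw [Finsupp.natCard_degree_eq, Nat.card_fin]
  rw [augPow_eq_restrictScalars, augPow_eq_restrictScalars]
  exact ⟨(MonoidAlgebra.basisAugmentationIdealPowQuotient k d).reindex
    ((Finite.equivFin _).trans (finCongr hcard))⟩

/-- For `G = ℤ^N` (`N ≥ 1`, written multiplicatively) and every `d`,
the quotient `I_k(G)^d / I_k(G)^{d+1}` of successive powers of the augmentation ideal of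
`k[G]` is a free `k`-module of rank `C(N+d-1, d)`. -/
theorem stmt_13 {k : Type*} [CommRing k] (N d : ℕ) (hN : 1 ≤ N) :
    Nonempty (Module.Basis (Fin ((N + d - 1).choose d)) k
      (↥(augPow k (Multiplicative (Fin N → ℤ)) d) ⧸
        Submodule.comap (augPow k (Multiplicative (Fin N → ℤ)) d).subtype
          (augPow k (Multiplicative (Fin N → ℤ)) (d + 1)))) :=
  stmt_13_general N d
end

section
/- Let k be a commutative unital ring and n, m ∈ ℕ. Let α_n : F_n → ℤ^n be the abelianization homomorphism of the free group on n generators (sending the i-th generator x_i to the i-th standard basis vector), and let γ_n : ℤ^n → F_n be the set map sending (a_1,…,a_n) to the word x_1^{a_1} x_2^{a_2} ⋯ x_n^{a_n}. Let α : F_n^{×m} → (ℤ^n)^{×m} and γ : (ℤ^n)^{×m} → F_n^{×m} be the componentwise maps, and let Γ : k[(ℤ^n)^{×m}] → k[F_n^{×m}] be the k-linear map sending the basis element corresponding to w to the basis element corresponding to γ(w). Then: (1) α ∘ γ is the identity of (ℤ^n)^{×m} (so Γ is a k-linear section of the algebra homomorphism k[F_n^{×m}] → k[(ℤ^n)^{×m}]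 induced by α); and (2) for every d ∈ ℕ, Γ maps I_k((ℤ^n)^{×m})^d into I_k(F_n^{×m})^d. -/
/-! `γ` is assembled from group homomorphisms by a single operation: from `γ_B : B → G` and
`γ_C : C → G` form `(b, c) ↦ γ_B b * γ_C c` on `B × C`. Indeed `γ_n` is the ordered product of
the homomorphisms `a ↦ x_i^a`, and `γ` the ordered product of the maps `v ↦ (1, …, γ_n v, …, 1)`.
Maps induced by homomorphisms are algebra maps over `k`, so they preserve the powers of the
augmentation ideal, and so does the operation: `I(B × C)^d` is spanned by the products `u ⊗ w`
with `u ∈ I(B)^a`, `w ∈ I(C)^b`, `a + b = d` (as `(b, c) - 1 = (b - 1) ⊗ c + 1 ⊗ (c - 1)`), and on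
such a product the induced map is multiplicative, giving `Γ_B u · Γ_C w ∈ I(G)^(a + b)`. -/

/-- The abelianization homomorphism `α_n : F_n → ℤ^n`, sending the `i`-th generator
`x_i` to the `i`-th standard basis vector. -/
def alphaN (n : ℕ) : FreeGroup (Fin n) →* Multiplicative (Fin n → ℤ) :=
  FreeGroup.lift fun i => Multiplicative.ofAdd (Pi.single i 1)

/-- The set map `γ_n : ℤ^n → F_n`, `(a₁, …, a_n) ↦ x₁^{a₁} x₂^{a₂} ⋯ x_n^{a_n}`. -/
def gammaN (n : ℕ) (a : Fin n → ℤ) : FreeGroup (Fin n) :=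
  (List.ofFn fun i => FreeGroup.of i ^ a i).prod

/-- The componentwise abelianization homomorphism `α : F_n^{×m} → (ℤ^n)^{×m}`. -/
def alphaM (n m : ℕ) :
    (Fin m → FreeGroup (Fin n)) →* Multiplicative (Fin m → Fin n → ℤ) where
  toFun w := Multiplicative.ofAdd fun j => Multiplicative.toAdd (alphaN n (w j))
  map_one' := by
    simp only [Pi.one_apply, map_one, toAdd_one]
    rfl
  map_mul' x y := by
    simp only [Pi.mul_apply, map_mul, toAdd_mul]
    rfl

/-- The componentwise map `γ : (ℤ^n)^{×m} → F_n^{×m}`. -/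
def gammaM (n m : ℕ) (v : Multiplicative (Fin m → Fin n → ℤ)) :
    Fin m → FreeGroup (Fin n) :=
  fun j => gammaN n (Multiplicative.toAdd v j)

lemma List.prod_ofFn_eq_single {M : Type*} [Monoid M] {N : ℕ} (f : Fin N → M) (i : Fin N)
    (h : ∀ j ≠ i, f j = 1) : (List.ofFn f).prod = f i := by
  induction N with
  | zero => exact i.elim0
  | succ N ih =>
    rw [List.ofFn_succ, List.prod_cons]
    cases i using Fin.cases with
    | zero =>
      rw [List.prod_eq_one, mul_one]
      simpa [List.mem_ofFn] using fun j => h j.succ (Fin.succ_ne_zero j)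
    | succ i =>
      rw [h 0 (Fin.succ_ne_zero i).symm, one_mul,
        ih (fun j => f j.succ) i fun j hj => h j.succ ((Fin.succ_injective _).ne hj)]

lemma List.prod_ofFn_mulSingle {M : Type*} [Monoid M] {N : ℕ} (g : Fin N → M) :
    (List.ofFn fun j => Pi.mulSingle j (g j)).prod = g := by
  funext i
  rw [Pi.list_prod_apply, List.map_ofFn]
  exact (List.prod_ofFn_eq_single _ i fun j hj => Pi.mulSingle_eq_of_ne hj.symm _).trans
    (Pi.mulSingle_eq_same i _)

namespace MonoidAlgebra

variable {k : Type*} [CommRing k] {A B C G : Type*} [Monoid A] [Monoid B] [Monoid C] [Monoid G]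

lemma mem_augIdeal_iff {x : MonoidAlgebra k G} :
    x ∈ augIdeal k G ↔ lift k k G 1 x = 0 := Iff.rfl

lemma of_sub_one_mem_augIdeal (g : G) : of k G g - 1 ∈ augIdeal k G := by
  simp [mem_augIdeal_iff]

lemma sub_augmentation_mem_span (x : MonoidAlgebra k G) :
    x - lift k k G 1 x • 1 ∈ Submodule.span k (Set.range fun g => of k G g - 1) := by
  induction x using MonoidAlgebra.induction_linear with
  | zero => simp
  | add x y hx hy =>
    rw [map_add, add_smul, add_sub_add_comm]
    exact Submodule.add_mem _ hx hy
  | single g r =>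
    have : single g r - lift k k G 1 (single g r) • 1 = r • (of k G g - 1) := by
      rw [lift_single, smul_sub, of_apply, smul_single', mul_one]
      simp
    rw [this]
    exact Submodule.smul_mem _ r (Submodule.subset_span ⟨g, rfl⟩)

lemma augIdeal_le_span : augIdeal k G ≤ Submodule.span k (Set.range fun g => of k G g - 1) := by
  intro x hx
  simpa [mem_augIdeal_iff.mp hx] using sub_augmentation_mem_span x

lemma top_mul_augIdeal_le : ⊤ * augIdeal k G ≤ augIdeal k G :=
  Submodule.mul_le.mpr fun x _ y hy => by simp [mem_augIdeal_iff.mp hy, mem_augIdeal_iff]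

lemma augIdeal_mul_top_le : augIdeal k G * ⊤ ≤ augIdeal k G :=
  Submodule.mul_le.mpr fun x hx y _ => by simp [mem_augIdeal_iff.mp hx, mem_augIdeal_iff]

lemma augPow_succ (d : ℕ) : augPow k G (d + 1) = augIdeal k G ^ (d + 1) := rfl

lemma augPow_one : augPow k G 1 = augIdeal k G := pow_one _

lemma augPow_mul_augPow_le (a b : ℕ) : augPow k G a * augPow k G b ≤ augPow k G (a + b) := by
  match a, b with
  | 0, 0 => exact le_top
  | 0, b + 1 =>
    calc ⊤ * augIdeal k G ^ (b + 1) = ⊤ * augIdeal k G * augIdeal k G ^ b := by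
          rw [pow_succ', mul_assoc]
      _ ≤ augIdeal k G * augIdeal k G ^ b := by gcongr; exact top_mul_augIdeal_le
      _ = augPow k G (0 + (b + 1)) := by rw [zero_add, ← pow_succ']; rfl
  | a + 1, 0 =>
    calc augIdeal k G ^ (a + 1) * ⊤ = augIdeal k G ^ a * (augIdeal k G * ⊤) := by
          rw [pow_succ, mul_assoc]
      _ ≤ augIdeal k G ^ a * augIdeal k G := by gcongr; exact augIdeal_mul_top_le
      _ = augPow k G (a + 1 + 0) := by rw [← pow_succ]; rfl
  | a + 1, b + 1 => exact (pow_add (augIdeal k G) (a + 1) (b + 1)).symm.le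

lemma augPow_succ_le (d : ℕ) : augPow k G (d + 1) ≤ augPow k G d * augIdeal k G := by
  cases d with
  | zero =>
    intro x hx
    rw [augPow_one] at hx
    show x ∈ ⊤ * augIdeal k G
    simpa using Submodule.mul_mem_mul (Submodule.mem_top (x := (1 : MonoidAlgebra k G))) hx
  | succ d => exact (pow_succ (augIdeal k G) (d + 1)).le

variable (k) in
def PreservesAugPow (f : A → B) : Prop :=
  ∀ d, ∀ x ∈ augPow k A d, mapDomainLinearMap k k f x ∈ augPow k B d

lemma lift_one_mapDomainAlgHom (f : A →* B) (x : MonoidAlgebra k A) :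
    lift k k B 1 (mapDomainAlgHom k k f x) = lift k k A 1 x := by
  induction x using MonoidAlgebra.induction_linear with
  | zero => simp
  | add x y hx hy => simp only [map_add, hx, hy]
  | single a r => simp

theorem PreservesAugPow.of_monoidHom (f : A →* B) : PreservesAugPow k f := by
  intro d x hx
  cases d with
  | zero => exact Submodule.mem_top
  | succ d =>
    have hI : (augIdeal k A).map (mapDomainAlgHom k k f).toLinearMap ≤ augIdeal k B := by
      rintro _ ⟨y, hy, rfl⟩
      exact mem_augIdeal_iff.mpr ((lift_one_mapDomainAlgHom f y).trans hy)
    rw [augPow_succ] at hx ⊢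
    have := Submodule.mem_map_of_mem (f := (mapDomainAlgHom k k f).toLinearMap) hx
    rw [Submodule.map_pow] at this
    exact pow_le_pow_left' hI _ this

theorem PreservesAugPow.comp {g : B → C} {f : A → B} (hg : PreservesAugPow k g)
    (hf : PreservesAugPow k f) : PreservesAugPow k (g ∘ f) := fun d x hx => by
  rw [mapDomainLinearMap_comp]
  exact hg d _ (hf d x hx)

lemma mapDomain_inl_mul_inr_single (b : B) (c : C) (r s : k) :
    mapDomainAlgHom k k (.inl B C) (single b r) * mapDomainAlgHom k k (.inr B C) (single c s) =
      single (b, c) (r * s) := by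
  simp [single_mul_single]

lemma commute_mapDomain_inl_inr (u : MonoidAlgebra k B) (w : MonoidAlgebra k C) :
    Commute (mapDomainAlgHom k k (.inl B C) u) (mapDomainAlgHom k k (.inr B C) w) := by
  induction u using MonoidAlgebra.induction_linear with
  | zero => simp
  | add u u' hu hu' => rw [map_add]; exact hu.add_left hu'
  | single b r =>
    induction w using MonoidAlgebra.induction_linear with
    | zero => simp
    | add w w' hw hw' => rw [map_add]; exact hw.add_right hw'
    | single c s =>
      simp only [Commute, SemiconjBy, mapDomainAlgHom_apply, mapDomain_single, single_mul_single,
        MonoidHom.inl_apply, MonoidHom.inr_apply, Prod.mk_mul_mk, mul_one, one_mul, mul_comm r]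

lemma mapDomainLinearMap_inl_mul_inr (f : B → G) (g : C → G) (u : MonoidAlgebra k B)
    (w : MonoidAlgebra k C) :
    mapDomainLinearMap k k (fun p : B × C => f p.1 * g p.2)
        (mapDomainAlgHom k k (.inl B C) u * mapDomainAlgHom k k (.inr B C) w) =
      mapDomainLinearMap k k f u * mapDomainLinearMap k k g w := by
  induction u using MonoidAlgebra.induction_linear with
  | zero => simp
  | add u u' hu hu' => simp only [map_add, add_mul, hu, hu']
  | single b r =>
    induction w using MonoidAlgebra.induction_linear with
    | zero => simp
    | add w w' hw hw' => simp only [map_add, mul_add, hw, hw']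
    | single c s =>
      rw [mapDomain_inl_mul_inr_single]
      simp [single_mul_single]

variable (k B C) in
noncomputable def prodAugSpan (d : ℕ) : Submodule k (MonoidAlgebra k (B × C)) :=
  Submodule.span k {x | ∃ a b u w, a + b = d ∧ u ∈ augPow k B a ∧ w ∈ augPow k C b ∧
    mapDomainAlgHom k k (.inl B C) u * mapDomainAlgHom k k (.inr B C) w = x}

lemma prodAugSpan_mul_le (d e : ℕ) :
    prodAugSpan k B C d * prodAugSpan k B C e ≤ prodAugSpan k B C (d + e) := by
  rw [prodAugSpan, prodAugSpan, Submodule.span_mul_span]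
  refine Submodule.span_mono ?_
  rintro _ ⟨_, ⟨a, b, u, w, rfl, hu, hw, rfl⟩, _, ⟨a', b', u', w', rfl, hu', hw', rfl⟩, rfl⟩
  refine ⟨a + a', b + b', u * u', w * w', by ring,
    augPow_mul_augPow_le a a' (Submodule.mul_mem_mul hu hu'),
    augPow_mul_augPow_le b b' (Submodule.mul_mem_mul hw hw'), ?_⟩
  dsimp only
  rw [map_mul, map_mul, (commute_mapDomain_inl_inr u' w).symm.mul_mul_mul_comm]

lemma top_le_prodAugSpan_zero : ⊤ ≤ prodAugSpan k B C 0 := by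
  rintro x -
  induction x using MonoidAlgebra.induction_linear with
  | zero => exact Submodule.zero_mem _
  | add x y hx hy => exact Submodule.add_mem _ hx hy
  | single p r =>
    refine Submodule.subset_span ⟨0, 0, single p.1 r, single p.2 1, rfl, Submodule.mem_top,
      Submodule.mem_top, ?_⟩
    rw [mapDomain_inl_mul_inr_single, mul_one]

lemma augIdeal_le_prodAugSpan_one : augIdeal k (B × C) ≤ prodAugSpan k B C 1 := by
  refine augIdeal_le_span.trans (Submodule.span_le.mpr ?_)
  rintro _ ⟨⟨b, c⟩, rfl⟩
  have hsplit : of k (B × C) (b, c) - 1 =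
      mapDomainAlgHom k k (.inl B C) (of k B b - 1) * mapDomainAlgHom k k (.inr B C) (of k C c) +
        mapDomainAlgHom k k (.inl B C) 1 * mapDomainAlgHom k k (.inr B C) (of k C c - 1) := by
    rw [map_sub, map_sub, map_one, map_one, sub_mul, one_mul, one_mul, sub_add_sub_cancel]
    simp only [of_apply, mapDomain_inl_mul_inr_single, mul_one]
  show of k (B × C) (b, c) - 1 ∈ _
  rw [hsplit]
  refine Submodule.add_mem _ (Submodule.subset_span ⟨1, 0, _, _, rfl, ?_, Submodule.mem_top, rfl⟩)
    (Submodule.subset_span ⟨0, 1, _, _, rfl, Submodule.mem_top, ?_, rfl⟩) <;>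
  rw [augPow_one] <;> exact of_sub_one_mem_augIdeal _

lemma augPow_le_prodAugSpan (d : ℕ) : augPow k (B × C) d ≤ prodAugSpan k B C d := by
  induction d with
  | zero => exact top_le_prodAugSpan_zero
  | succ d ih =>
    calc augPow k (B × C) (d + 1) ≤ augPow k (B × C) d * augIdeal k (B × C) := augPow_succ_le d
      _ ≤ prodAugSpan k B C d * prodAugSpan k B C 1 := by
          gcongr
          exact augIdeal_le_prodAugSpan_one
      _ ≤ prodAugSpan k B C (d + 1) := prodAugSpan_mul_le d 1

theorem PreservesAugPow.prod_mul {f : B → G} {g : C → G} (hf : PreservesAugPow k f)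
    (hg : PreservesAugPow k g) : PreservesAugPow k (fun p : B × C => f p.1 * g p.2) := by
  intro d x hx
  replace hx := augPow_le_prodAugSpan d hx
  induction hx using Submodule.span_induction with
  | mem _ h =>
    obtain ⟨a, b, u, w, rfl, hu, hw, rfl⟩ := h
    rw [mapDomainLinearMap_inl_mul_inr]
    exact augPow_mul_augPow_le a b (Submodule.mul_mem_mul (hf a u hu) (hg b w hw))
  | zero => simp
  | add x y _ _ hx hy => rw [map_add]; exact Submodule.add_mem _ hx hy
  | smul r x _ hx => rw [map_smul]; exact Submodule.smul_mem _ r hx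

theorem PreservesAugPow.listProd_ofFn {N : ℕ} {f : Fin N → A → G}
    (hf : ∀ i, PreservesAugPow k (f i)) :
    PreservesAugPow k fun v : Fin N → A => (List.ofFn fun i => f i (v i)).prod := by
  induction N with
  | zero => exact PreservesAugPow.of_monoidHom (1 : (Fin 0 → A) →* G)
  | succ N ih =>
    let split : (Fin (N + 1) → A) →* A × (Fin N → A) :=
      (Pi.evalMonoidHom _ 0).prod (MonoidHom.pi fun i => Pi.evalMonoidHom _ i.succ)
    convert ((hf 0).prod_mul (ih fun i => hf i.succ)).comp (.of_monoidHom split) using 1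
    funext v
    simp [split, List.ofFn_succ]

theorem lift_mapDomainLinearMap_of_leftInverse {f : A → B} {φ : B →* A}
    (h : Function.LeftInverse φ f) (x : MonoidAlgebra k A) :
    lift k (MonoidAlgebra k A) B ((of k A).comp φ) (mapDomainLinearMap k k f x) = x := by
  induction x using MonoidAlgebra.induction_linear with
  | zero => simp
  | add x y hx hy => rw [map_add, map_add, hx, hy]
  | single a r => simp [h a]

end MonoidAlgebra

open MonoidAlgebra

theorem preservesAugPow_gammaN (k : Type*) [CommRing k] (n : ℕ) :
    PreservesAugPow k (gammaN n ∘ Multiplicative.toAdd) :=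
  (PreservesAugPow.listProd_ofFn fun i => .of_monoidHom (zpowersHom _ (FreeGroup.of i))).comp
    (.of_monoidHom (MulEquiv.piMultiplicative fun _ : Fin n => ℤ).toMonoidHom)

theorem preservesAugPow_gammaM (k : Type*) [CommRing k] (n m : ℕ) :
    PreservesAugPow k (gammaM n m) := by
  convert (PreservesAugPow.listProd_ofFn fun j =>
    (PreservesAugPow.of_monoidHom (MonoidHom.mulSingle (fun _ : Fin m => FreeGroup (Fin n)) j)).comp
      (preservesAugPow_gammaN k n)).comp
    (.of_monoidHom (MulEquiv.piMultiplicative fun _ : Fin m => Fin n → ℤ).toMonoidHom) using 1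
  funext v
  simp only [Function.comp_apply, MonoidHom.mulSingle_apply, List.prod_ofFn_mulSingle]
  rfl

theorem alphaN_gammaN (n : ℕ) (a : Fin n → ℤ) :
    alphaN n (gammaN n a) = Multiplicative.ofAdd a := by
  have hpow (i : Fin n) : alphaN n (FreeGroup.of i ^ a i) = .ofAdd (Pi.single i (a i)) := by
    rw [map_zpow, alphaN, FreeGroup.lift_apply_of, ← ofAdd_zsmul, ← Pi.single_smul, smul_eq_mul,
      mul_one]
  rw [gammaN, map_list_prod, List.map_ofFn, List.prod_ofFn]
  simp only [Function.comp_apply, hpow, ← ofAdd_sum, Finset.univ_sum_single]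

theorem alphaM_gammaM (n m : ℕ) (v : Multiplicative (Fin m → Fin n → ℤ)) :
    alphaM n m (gammaM n m v) = v := by
  simp [alphaM, gammaM, alphaN_gammaN]

/-- (1) `α ∘ γ` is the identity of `(ℤ^n)^{×m}`; hence the `k`-linear
map `Γ : k[(ℤ^n)^{×m}] → k[F_n^{×m}]`, sending the basis element corresponding to `w` to
the basis element corresponding to `γ(w)`, is a `k`-linear section of the algebra
homomorphism `k[F_n^{×m}] → k[(ℤ^n)^{×m}]` induced by `α`; and (2) for every `d ∈ ℕ`,
`Γ` maps `I_k((ℤ^n)^{×m})^d` into `I_k(F_n^{×m})^d`. -/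
theorem stmt_16 (k : Type*) [CommRing k] (n m : ℕ) :
    (∀ v : Multiplicative (Fin m → Fin n → ℤ), alphaM n m (gammaM n m v) = v) ∧
    ∃ Γ : MonoidAlgebra k (Multiplicative (Fin m → Fin n → ℤ)) →ₗ[k]
        MonoidAlgebra k (Fin m → FreeGroup (Fin n)),
      (∀ v : Multiplicative (Fin m → Fin n → ℤ),
        Γ (MonoidAlgebra.of k (Multiplicative (Fin m → Fin n → ℤ)) v)
          = MonoidAlgebra.of k (Fin m → FreeGroup (Fin n)) (gammaM n m v)) ∧
      (∀ x : MonoidAlgebra k (Multiplicative (Fin m → Fin n → ℤ)),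
        (MonoidAlgebra.lift k (MonoidAlgebra k (Multiplicative (Fin m → Fin n → ℤ)))
            (Fin m → FreeGroup (Fin n))
            ((MonoidAlgebra.of k (Multiplicative (Fin m → Fin n → ℤ))).comp (alphaM n m)))
          (Γ x) = x) ∧
      (∀ d : ℕ, ∀ x ∈ augPow k (Multiplicative (Fin m → Fin n → ℤ)) d,
        Γ x ∈ augPow k (Fin m → FreeGroup (Fin n)) d) :=
  ⟨alphaM_gammaM n m, mapDomainLinearMap k k (gammaM n m),
    fun _ => mapDomainLinearMap_single _ _ _,
    lift_mapDomainLinearMap_of_leftInverse (alphaM_gammaM n m),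
    preservesAugPow_gammaM k n m⟩
end

section
/- Let k be a field, n ≥ 1, and let J be a left ideal of the matrix ring M_n(k) with J ≠ M_n(k). Then every left module M over M_n(k) is J-vanishingly generated: the M_n(k)-span of the subset {m ∈ M | K•m = 0 for all K ∈ J} is all of M. -/
/-!
A proper left ideal `J` of a semisimple ring is generated by an idempotent `e ≠ 1`, so the nonzero
element `1 - e` is killed by `J` on the left. Hence `(1 - e) • m` is `J`-vanishing for every `m`,
i.e. `1 - e` acts as zero on the quotient of `M` by the span of the `J`-vanishing elements. In a
simple ring the kernel of an action is a two-sided ideal, so a nonzero element acting as zero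
forces the whole ring, in particular `1`, to act as zero: the quotient is trivial.
-/

theorem Ideal.exists_ne_zero_forall_mul_eq_zero_of_ne_top {R : Type*} [Ring R]
    [IsSemisimpleRing R] {J : Ideal R} (hJ : J ≠ ⊤) : ∃ f ≠ 0, ∀ K ∈ J, K * f = 0 := by
  obtain ⟨e, he, rfl⟩ := IsSemisimpleRing.ideal_eq_span_idempotent J
  refine ⟨1 - e, fun h ↦ hJ ?_, fun K hK ↦ ?_⟩
  · rw [← sub_eq_zero.mp h, Ideal.span_singleton_one]
  · obtain ⟨a, rfl⟩ := Submodule.mem_span_singleton.mp hK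
    rw [smul_eq_mul, mul_assoc, mul_sub, mul_one, he.eq, sub_self, mul_zero]

theorem IsSimpleRing.subsingleton_of_smul_eq_zero {R M : Type*} [Ring R] [IsSimpleRing R]
    [AddCommGroup M] [Module R M] {f : R} (hf : f ≠ 0) (h : ∀ m : M, f • m = 0) :
    Subsingleton M := by
  have hker : f ∈ TwoSidedIdeal.ker (Module.toAddMonoidEnd R M) :=
    (TwoSidedIdeal.mem_ker _).mpr (AddMonoidHom.ext h)
  have hone := (TwoSidedIdeal.mem_ker _).mp (IsSimpleRing.one_mem_of_ne_zero_mem _ hf hker)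
  refine ⟨fun m m' ↦ ?_⟩
  rw [← one_smul R m, ← one_smul R m']
  exact (DFunLike.congr_fun hone m).trans (DFunLike.congr_fun hone m').symm

theorem IsSimpleRing.span_forall_smul_eq_zero_eq_top {R : Type*} [Ring R] [IsSimpleRing R]
    [IsSemisimpleRing R] {J : Ideal R} (hJ : J ≠ ⊤) (M : Type*) [AddCommGroup M] [Module R M] :
    Submodule.span R {m : M | ∀ K ∈ J, K • m = 0} = ⊤ := by
  obtain ⟨f, hf, hJf⟩ := J.exists_ne_zero_forall_mul_eq_zero_of_ne_top hJ
  rw [← Submodule.Quotient.subsingleton_iff]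
  refine subsingleton_of_smul_eq_zero hf fun q ↦ ?_
  obtain ⟨m, rfl⟩ := Submodule.mkQ_surjective _ q
  rw [← map_smul, Submodule.mkQ_apply, Submodule.Quotient.mk_eq_zero]
  exact Submodule.subset_span fun K hK ↦ by rw [← mul_smul, hJf K hK, zero_smul]

/-- Over a field `k` and for `n ≥ 1`, every proper left ideal `J` of the
matrix ring `M_n(k)` makes every left `M_n(k)`-module `J`-vanishingly generated: the
`M_n(k)`-span of the `J`-vanishing subset is the whole module. -/
theorem stmt_19 {k : Type*} [Field k] (n : ℕ) (hn : 1 ≤ n)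
    (J : Submodule (Matrix (Fin n) (Fin n) k) (Matrix (Fin n) (Fin n) k))
    (hJ : J ≠ ⊤)
    (M : Type*) [AddCommGroup M] [Module (Matrix (Fin n) (Fin n) k) M] :
    Submodule.span (Matrix (Fin n) (Fin n) k) {m : M | ∀ K ∈ J, K • m = 0} = ⊤ :=
  have : Nonempty (Fin n) := ⟨⟨0, hn⟩⟩
  IsSimpleRing.span_forall_smul_eq_zero_eq_top hJ M
end
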